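/- Let g ≥ 2 and n ≥ 0, and consider integers g₁,…,g_h ≥ 0 and a nonnegative integer k (number of double points) satisfying the Euler characteristic relation 2 − 2g = Σₐ₌₁ʰ (2 − 2gₐ) − 2k. Suppose nonnegative integers c₁,…,c_h satisfy cₐ ≤ gₐ − 1 whenever gₐ ≥ 1 and cₐ ≤ gₐ (i.e. cₐ = 0) whenever gₐ = 0. If m = k + Σₐ cₐ, and ℓ denotes the number of indices a with gₐ = 0, then ℓ ≥ m + 1 − g. -/

import Mathlib

/-!
Summing the Euler characteristic relation over the components gives
`g = Σ gₐ + k + 1 - h`. Each component contributes `cₐ ≤ gₐ - 1`, except that a genus 0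
component contributes `0 = gₐ - 1 + 1`; hence `Σ cₐ ≤ Σ gₐ - h + ℓ`, and adding the `k`
nodes gives `m ≤ g - 1 + ℓ`.
-/

open Finset

variable {ι : Type*} [Fintype ι]

theorem genus_eq_of_euler_char {g k : ℕ} {gen : ι → ℕ}
    (heuler : (2 : ℤ) - 2 * g = (∑ a, ((2 : ℤ) - 2 * gen a)) - 2 * k) :
    (g : ℤ) = ∑ a, (gen a : ℤ) + k + 1 - Fintype.card ι := by
  rw [sum_sub_distrib, sum_const, card_univ, ← mul_sum] at heuler
  simp only [nsmul_eq_mul] at heuler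
  linarith

theorem codim_le_genus_sub_one_add_ite {gₐ cₐ : ℕ}
    (hc1 : 1 ≤ gₐ → cₐ ≤ gₐ - 1) (hc0 : gₐ = 0 → cₐ = 0) :
    (cₐ : ℤ) ≤ gₐ - 1 + if gₐ = 0 then 1 else 0 := by
  split_ifs with h0
  · simp [h0, hc0 h0]
  · have := hc1 (Nat.one_le_iff_ne_zero.mpr h0)
    omega

theorem sum_codim_le {gen c : ι → ℕ}
    (hc1 : ∀ a, 1 ≤ gen a → c a ≤ gen a - 1) (hc0 : ∀ a, gen a = 0 → c a = 0) :
    ∑ a, (c a : ℤ) ≤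
      ∑ a, (gen a : ℤ) - Fintype.card ι + #{a | gen a = 0} := by
  calc ∑ a, (c a : ℤ) ≤ ∑ a, ((gen a : ℤ) - 1 + if gen a = 0 then 1 else 0) :=
        sum_le_sum fun a _ => codim_le_genus_sub_one_add_ite (hc1 a) (hc0 a)
    _ = ∑ a, (gen a : ℤ) - Fintype.card ι + #{a | gen a = 0} := by
        rw [sum_add_distrib, sum_sub_distrib, sum_const, card_univ, sum_boole]
        simp

theorem stmt_5_general (g : ℕ) (h k : ℕ)
    (gen : Fin h → ℕ) (c : Fin h → ℕ)
    (heuler : (2 : ℤ) - 2 * g = (∑ a, ((2 : ℤ) - 2 * gen a)) - 2 * k)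
    (hc1 : ∀ a, 1 ≤ gen a → c a ≤ gen a - 1)
    (hc0 : ∀ a, gen a = 0 → c a = 0)
    (m : ℕ) (hm : m = k + ∑ a, c a)
    (ℓ : ℕ) (hℓ : ℓ = (Finset.univ.filter fun a => gen a = 0).card) :
    (m : ℤ) + 1 - g ≤ ℓ := by
  have hgenus := genus_eq_of_euler_char heuler
  have hcodim := sum_codim_le hc1 hc0
  rw [Fintype.card_fin] at hgenus hcodim
  subst hm hℓ
  push_cast
  linarith

/-- Arithmetic core of Vakil's conjecture: a stratum with `h` components of genera `gₐ`
and `k` nodes, with codimension contributions `cₐ ≤ gₐ − 1` on positive-genus components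
and `cₐ = 0` on genus-0 components, total codimension `m = k + Σ cₐ`, has at least
`m + 1 − g` genus 0 components. -/
theorem stmt_5 (g : ℕ) (hg : 2 ≤ g) (n h k : ℕ)
    (gen : Fin h → ℕ) (c : Fin h → ℕ)
    (heuler : (2 : ℤ) - 2 * g = (∑ a, ((2 : ℤ) - 2 * gen a)) - 2 * k)
    (hc1 : ∀ a, 1 ≤ gen a → c a ≤ gen a - 1)
    (hc0 : ∀ a, gen a = 0 → c a = 0)
    (m : ℕ) (hm : m = k + ∑ a, c a)
    (ℓ : ℕ) (hℓ : ℓ = (Finset.univ.filter fun a => gen a = 0).card) :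
    (m : ℤ) + 1 - g ≤ ℓ :=
  stmt_5_general g h k gen c heuler hc1 hc0 m hm ℓ hℓ
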